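/- arXiv:2111.15299 — 4 statements merged into one kernel-verified Lean document; each statement's English description precedes it below -/
import Mathlib

section
/- Let P be an elementary existential doctrine (a contravariant functor from a category C with finite products to inf-semilattices, with fibered equalities and left adjoints to reindexing along projections satisfying Beck–Chevalley and Frobenius). If q : A → A/ρ is an effective quotient arrow for a P-equivalence relation ρ (i.e. ρ = P(q×q)(δ_{A/ρ})), then q is of effective descent (the map P(q) : P(A/ρ) → Des(ρ) onto descent data is an isomorphism) if and only if q is P-surjective, i.e. ∃_q(⊤_A) = ⊤_{A/ρ}. -/
open CategoryTheory CategoryTheory.Limits Opposite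

noncomputable section

universe w v u

namespace DoctrinePaper

variable {C : Type u} [Category.{v} C] [HasFiniteProducts C]

/-- The fiber of a primary doctrine `P : Cᵒᵖ ⥤ SemilatInfCat` over an object `A`. -/
abbrev Fib (P : Cᵒᵖ ⥤ SemilatInfCat.{w}) (A : C) : Type w :=
  ↥(P.obj (op A))

/-- Reindexing along an arrow `f : A ⟶ B`. -/
def rmap (P : Cᵒᵖ ⥤ SemilatInfCat.{w}) {A B : C} (f : A ⟶ B) :
    Fib P B → Fib P A :=
  fun x => (P.map f.op) x

variable (P : Cᵒᵖ ⥤ SemilatInfCat.{w})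

/-- An elementary doctrine: fibered equalities `δ A ∈ P (A ⨯ A)` such that
`E_e(α) = P⟨pr1,pr2⟩(α) ⊓ P⟨pr2,pr3⟩(δ A)` is left adjoint to reindexing along
`e = ⟨pr1,pr2,pr2⟩ : X ⨯ A ⟶ (X ⨯ A) ⨯ A`. -/
structure IsElementary where
  δ : ∀ A : C, Fib P (A ⨯ A)
  adj :
    ∀ (X A : C) (α : Fib P (X ⨯ A)) (β : Fib P ((X ⨯ A) ⨯ A)),
      (rmap P (prod.fst : (X ⨯ A) ⨯ A ⟶ X ⨯ A) α ⊓
          rmap P (prod.lift (prod.fst ≫ prod.snd) prod.snd : (X ⨯ A) ⨯ A ⟶ A ⨯ A) (δ A) ≤ β)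
        ↔ α ≤ rmap P (prod.lift (𝟙 (X ⨯ A)) prod.snd : X ⨯ A ⟶ (X ⨯ A) ⨯ A) β

/-- A `P`-equivalence relation over `A`. -/
structure IsEqRel (hE : IsElementary P) {A : C} (ρ : Fib P (A ⨯ A)) : Prop where
  refl : hE.δ A ≤ ρ
  symm : ρ = rmap P (prod.lift prod.snd prod.fst : A ⨯ A ⟶ A ⨯ A) ρ
  trans :
    rmap P (prod.fst : (A ⨯ A) ⨯ A ⟶ A ⨯ A) ρ ⊓
        rmap P (prod.lift (prod.fst ≫ prod.snd) prod.snd : (A ⨯ A) ⨯ A ⟶ A ⨯ A) ρ ≤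
      rmap P (prod.lift (prod.fst ≫ prod.fst) prod.snd : (A ⨯ A) ⨯ A ⟶ A ⨯ A) ρ

/-- An elementary existential doctrine, together with the induced left adjoints
`∃_f` along all arrows, satisfying the adjunction law, Frobenius reciprocity, and
the Beck–Chevalley condition along pullbacks of projections. -/
structure IsExistential extends IsElementary P where
  E : ∀ {A B : C}, (A ⟶ B) → Fib P A → Fib P B
  adjE : ∀ {A B : C} (f : A ⟶ B) (α : Fib P A) (β : Fib P B),
    E f α ≤ β ↔ α ≤ rmap P f β
  frobenius : ∀ {A B : C} (f : A ⟶ B) (α : Fib P A) (β : Fib P B),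
    E f (α ⊓ rmap P f β) = E f α ⊓ β
  beckChevalley : ∀ {B A A' : C} (f : A' ⟶ A) (β : Fib P (B ⨯ A)),
    E (prod.snd : B ⨯ A' ⟶ A') (rmap P (prod.map (𝟙 B) f) β) =
      rmap P f (E (prod.snd : B ⨯ A ⟶ A) β)

/-- Descent data for a relation `ρ` over `A`. -/
def Des {A : C} (ρ : Fib P (A ⨯ A)) : Set (Fib P A) :=
  {α | rmap P (prod.fst : A ⨯ A ⟶ A) α ⊓ ρ ≤ rmap P (prod.snd : A ⨯ A ⟶ A) α}

/-- Comprehensive diagonals: `f = g` iff `⊤ = P⟨f,g⟩(δ)`. -/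
def ComprehensiveDiagonals (hE : IsElementary P) : Prop :=
  ∀ {X A : C} (f g : X ⟶ A), f = g ↔ rmap P (prod.lift f g) (hE.δ A) = ⊤

/-- (Weak) comprehension structure. -/
structure Comprehension where
  cObj : ∀ {A : C}, Fib P A → C
  cArr : ∀ {A : C} (α : Fib P A), cObj α ⟶ A
  cTop : ∀ {A : C} (α : Fib P A), rmap P (cArr α) α = ⊤
  cUniv : ∀ {A : C} (α : Fib P A) {Y : C} (f : Y ⟶ A),
    rmap P f α = ⊤ → ∃ k : Y ⟶ cObj α, k ≫ cArr α = f

/-- Full comprehension. -/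
def Comprehension.Full (hC : Comprehension P) : Prop :=
  ∀ {A : C} (α β : Fib P A), α ≤ β ↔ rmap P (hC.cArr α) β = ⊤

/-- Strong comprehension: comprehension arrows are monic. -/
def Comprehension.Strong (hC : Comprehension P) : Prop :=
  ∀ {A : C} (α : Fib P A), Mono (hC.cArr α)

/-- `P`-injective arrow. -/
def PInj (hE : IsElementary P) {X A : C} (f : X ⟶ A) : Prop :=
  rmap P (prod.map f f) (hE.δ A) = hE.δ X

/-- `P`-surjective arrow. -/
def PSurj (hEx : IsExistential P) {X A : C} (f : X ⟶ A) : Prop :=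
  hEx.E f (⊤ : Fib P X) = ⊤

/-- The product relation `ρ ⊠ σ` on `(A ⨯ B) ⨯ (A ⨯ B)`. -/
def boxprod {A B : C} (ρ : Fib P (A ⨯ A)) (σ : Fib P (B ⨯ B)) :
    Fib P ((A ⨯ B) ⨯ (A ⨯ B)) :=
  rmap P (prod.map prod.fst prod.fst) ρ ⊓ rmap P (prod.map prod.snd prod.snd) σ

/-!
Since `ρ` is the kernel `P(q × q)(δ)` of `q`, Beck–Chevalley applied to the graph formula
`∃_q α = ∃_{pr₂}(P(pr₁) α ∧ P(q × 1)(δ))` gives `P(q)(∃_q α) = ∃_{pr₂}(P(pr₁) α ∧ ρ)`, which is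
below `α` exactly when `α` is a descent datum. Hence `P(q)` always maps `P(Q)` onto `Des ρ`.
By Frobenius, `∃_q (P(q) β) = ∃_q ⊤ ∧ β`, so `P(q)` is injective when `q` is `P`-surjective;
conversely `P(q)(∃_q ⊤) = ⊤ = P(q) ⊤`, so injectivity of `P(q)` forces `∃_q ⊤ = ⊤`.
-/

attribute [local simp] prod.lift_fst prod.lift_snd prod.lift_fst_assoc prod.lift_snd_assoc

omit [HasFiniteProducts C] in
lemma rmap_comp {A B D : C} (f : A ⟶ B) (g : B ⟶ D) (x : Fib P D) :
    rmap P (f ≫ g) x = rmap P f (rmap P g x) := by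
  simp [rmap]

omit [HasFiniteProducts C] in
lemma rmap_id {A : C} (x : Fib P A) : rmap P (𝟙 A) x = x := by
  simp [rmap]

omit [HasFiniteProducts C] in
lemma rmap_top {A B : C} (f : A ⟶ B) : rmap P f ⊤ = ⊤ :=
  map_top (show InfTopHom (P.obj (op B)) (P.obj (op A)) from P.map f.op)

omit [HasFiniteProducts C] in
lemma rmap_inf {A B : C} (f : A ⟶ B) (x y : Fib P B) :
    rmap P f (x ⊓ y) = rmap P f x ⊓ rmap P f y :=
  map_inf (show InfTopHom (P.obj (op B)) (P.obj (op A)) from P.map f.op) x y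

omit [HasFiniteProducts C] in
lemma rmap_mono {A B : C} (f : A ⟶ B) {x y : Fib P B} (h : x ≤ y) :
    rmap P f x ≤ rmap P f y :=
  OrderHomClass.mono (show InfTopHom (P.obj (op B)) (P.obj (op A)) from P.map f.op) h

variable {P}

namespace IsElementary

variable (hE : IsElementary P)

lemma rmap_lift_self_δ_eq_top {X A : C} (f : X ⟶ A) :
    rmap P (prod.lift f f) (hE.δ A) = ⊤ := by
  have hsnd : rmap P (prod.lift prod.snd prod.snd : X ⨯ A ⟶ A ⨯ A) (hE.δ A) = ⊤ := by
    have h := (hE.adj X A ⊤ _).mp inf_le_right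
    rw [← rmap_comp] at h
    exact top_le_iff.mp (by simpa using h)
  rw [show prod.lift f f = prod.lift (𝟙 X) f ≫ prod.lift prod.snd prod.snd by ext <;> simp,
    rmap_comp, hsnd, rmap_top]

lemma rmap_fst_inf_δ_le_rmap_snd {A : C} (γ : Fib P A) :
    rmap P prod.fst γ ⊓ hE.δ A ≤ rmap P prod.snd γ := by
  have h := (hE.adj A A (rmap P prod.snd γ) (rmap P prod.snd γ)).mpr
    (by rw [← rmap_comp]; simp)
  have h' := rmap_mono P (prod.lift (prod.lift prod.fst prod.fst) prod.snd : A ⨯ A ⟶ _) h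
  simpa only [rmap_inf, ← rmap_comp, prod.lift_snd, prod.lift_fst_assoc, prod.lift_fst,
    prod.comp_lift, prod.lift_fst_snd, rmap_id] using h'

lemma rmap_mem_Des_kernel {A Q : C} (f : A ⟶ Q) (β : Fib P Q) :
    rmap P f β ∈ Des P (rmap P (prod.map f f) (hE.δ Q)) := by
  have h := rmap_mono P (prod.map f f) (hE.rmap_fst_inf_δ_le_rmap_snd β)
  simpa only [Des, Set.mem_ofPred_eq, rmap_inf, ← rmap_comp, prod.map_fst, prod.map_snd] using h

end IsElementary

namespace IsExistential

variable (hP : IsExistential P)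

lemma le_rmap_E {A B : C} (f : A ⟶ B) (α : Fib P A) : α ≤ rmap P f (hP.E f α) :=
  (hP.adjE f α _).mp le_rfl

lemma rmap_E_top {A B : C} (f : A ⟶ B) : rmap P f (hP.E f ⊤) = ⊤ :=
  top_le_iff.mp (hP.le_rmap_E f ⊤)

lemma E_eq_E_snd_graph {A Q : C} (q : A ⟶ Q) (α : Fib P A) :
    hP.E q α = hP.E prod.snd (rmap P prod.fst α ⊓ rmap P (prod.map q (𝟙 Q)) (hP.δ Q)) := by
  apply le_antisymm
  · rw [hP.adjE]
    have h := rmap_mono P (prod.lift (𝟙 A) q) (hP.le_rmap_E prod.snd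
      (rmap P prod.fst α ⊓ rmap P (prod.map q (𝟙 Q)) (hP.δ Q)))
    have hgraph : rmap P (prod.lift (𝟙 A) q ≫ prod.map q (𝟙 Q)) (hP.δ Q) = ⊤ := by
      rw [show prod.lift (𝟙 A) q ≫ prod.map q (𝟙 Q) = prod.lift q q by ext <;> simp]
      exact hP.rmap_lift_self_δ_eq_top q
    simpa only [rmap_inf, ← rmap_comp, hgraph, prod.lift_fst, prod.lift_snd, rmap_id,
      inf_top_eq] using h
  · rw [hP.adjE]
    calc rmap P prod.fst α ⊓ rmap P (prod.map q (𝟙 Q)) (hP.δ Q)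
        ≤ rmap P (prod.map q (𝟙 Q)) (rmap P prod.fst (hP.E q α) ⊓ hP.δ Q) := by
          rw [rmap_inf, ← rmap_comp, prod.map_fst, rmap_comp]
          exact inf_le_inf_right _ (rmap_mono P _ (hP.le_rmap_E q α))
      _ ≤ rmap P prod.snd (hP.E q α) := by
          refine (rmap_mono P _ (hP.rmap_fst_inf_δ_le_rmap_snd _)).trans_eq ?_
          rw [← rmap_comp, prod.map_snd, Category.comp_id]

lemma rmap_E_eq_E_snd_kernel {A Q : C} (q : A ⟶ Q) (α : Fib P A) :
    rmap P q (hP.E q α) =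
      hP.E prod.snd (rmap P prod.fst α ⊓ rmap P (prod.map q q) (hP.δ Q)) := by
  rw [hP.E_eq_E_snd_graph, ← hP.beckChevalley, rmap_inf, ← rmap_comp, ← rmap_comp,
    prod.map_fst, Category.comp_id, prod.map_map, Category.id_comp, Category.comp_id]

lemma rmap_E_eq_of_mem_Des_kernel {A Q : C} {q : A ⟶ Q} {α : Fib P A}
    (hα : α ∈ Des P (rmap P (prod.map q q) (hP.δ Q))) : rmap P q (hP.E q α) = α :=
  le_antisymm (by rw [hP.rmap_E_eq_E_snd_kernel, hP.adjE]; exact hα) (hP.le_rmap_E q α)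

lemma leftInverse_E_rmap_of_PSurj {A B : C} {f : A ⟶ B} (hf : PSurj P hP f) :
    Function.LeftInverse (hP.E f) (rmap P f) := fun β => by
  rw [PSurj] at hf
  simpa only [top_inf_eq, hf] using hP.frobenius f ⊤ β

end IsExistential

theorem effective_quotient_descent_iff_surjective_general
    (hP : IsExistential P) {A Q : C} (ρ : Fib P (A ⨯ A))
    (q : A ⟶ Q)
    (heff : ρ = rmap P (prod.map q q) (hP.δ Q)) :
    Set.BijOn (rmap P q) Set.univ (Des P ρ) ↔ PSurj P hP q := by
  subst heff
  refine ⟨fun hbij => ?_, fun hsurj => ⟨?_, ?_, ?_⟩⟩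
  · exact hbij.injOn trivial trivial (by rw [hP.rmap_E_top, rmap_top])
  · exact fun β _ => hP.rmap_mem_Des_kernel q β
  · exact (hP.leftInverse_E_rmap_of_PSurj hsurj).injective.injOn
  · exact fun α hα => ⟨hP.E q α, trivial, hP.rmap_E_eq_of_mem_Des_kernel hα⟩

/-- In an elementary existential doctrine, an effective quotient
arrow `q : A ⟶ Q` of a `P`-equivalence relation `ρ` is of effective descent
(reindexing along `q` is an isomorphism from `P(Q)` onto the descent data `Des ρ`)
if and only if `q` is `P`-surjective, i.e. `∃_q ⊤ = ⊤`. -/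
theorem effective_quotient_descent_iff_surjective
    (hP : IsExistential P) {A Q : C} (ρ : Fib P (A ⨯ A))
    (hρ : IsEqRel P hP.toIsElementary ρ) (q : A ⟶ Q)
    (heff : ρ = rmap P (prod.map q q) (hP.δ Q))
    (huniv : ∀ {Y : C} (f : A ⟶ Y), ρ ≤ rmap P (prod.map f f) (hP.δ Y) →
      ∃! h : Q ⟶ Y, q ≫ h = f) :
    Set.BijOn (rmap P q) Set.univ (Des P ρ) ↔ PSurj P hP q :=
  effective_quotient_descent_iff_surjective_general hP ρ q heff

end DoctrinePaper
end
end

section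
/- Let P : C^op → InfSL be a variational doctrine (elementary with comprehensive diagonals and full weak comprehension) on a category C with finite products. If C is elementary, has comprehensive diagonals and strong comprehensions, then C has all finite limits; concretely, for parallel arrows f, g : X → A, the comprehension arrow of P⟨f,g⟩(δ_A) is an equalizer of f and g. -/
open CategoryTheory CategoryTheory.Limits Opposite

noncomputable section

universe w v u

namespace DoctrinePaper

variable {C : Type u} [Category.{v} C] [HasFiniteProducts C]

variable (P : Cᵒᵖ ⥤ SemilatInfCat.{w})

theorem rmap_comp_s1 {D : Type*} [Category D] {Q : Dᵒᵖ ⥤ SemilatInfCat.{w}} {X Y Z : D}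
    (u : X ⟶ Y) (v : Y ⟶ Z) (β : Fib Q Z) :
    rmap Q (u ≫ v) β = rmap Q u (rmap Q v β) := by
  simp only [rmap, op_comp, Q.map_comp]
  rfl

section

variable {P} {hE : IsElementary P}

theorem ComprehensiveDiagonals.rmap_lift_δ_eq_top_iff (hcd : ComprehensiveDiagonals P hE)
    {Z X A : C} (h : Z ⟶ X) (f g : X ⟶ A) :
    rmap P h (rmap P (prod.lift f g) (hE.δ A)) = ⊤ ↔ h ≫ f = h ≫ g := by
  rw [← rmap_comp_s1, prod.comp_lift, ← hcd]

theorem ComprehensiveDiagonals.cArr_comp_eq (hcd : ComprehensiveDiagonals P hE)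
    (hC : Comprehension P) {X A : C} (f g : X ⟶ A) :
    hC.cArr (rmap P (prod.lift f g) (hE.δ A)) ≫ f =
      hC.cArr (rmap P (prod.lift f g) (hE.δ A)) ≫ g :=
  (hcd.rmap_lift_δ_eq_top_iff _ f g).mp (hC.cTop _)

/-- The comprehension of the equality predicate `P⟨f,g⟩(δ A)`, as a fork on `f` and `g`. -/
def ComprehensiveDiagonals.comprehensionFork (hcd : ComprehensiveDiagonals P hE)
    (hC : Comprehension P) {X A : C} (f g : X ⟶ A) : Fork f g :=
  Fork.ofι _ (hcd.cArr_comp_eq hC f g)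

/-- Weak comprehension provides the factorization, strength makes it unique. -/
def ComprehensiveDiagonals.isLimitComprehensionFork (hcd : ComprehensiveDiagonals P hE)
    {hC : Comprehension P} (hs : hC.Strong P) {X A : C} (f g : X ⟶ A) :
    IsLimit (hcd.comprehensionFork hC f g) :=
  Fork.IsLimit.mk' _ fun s =>
    have hfac := hC.cUniv _ s.ι ((hcd.rmap_lift_δ_eq_top_iff s.ι f g).mpr s.condition)
    ⟨hfac.choose, hfac.choose_spec,
      fun hm => (hs _).right_cancellation _ _ (hm.trans hfac.choose_spec.symm)⟩

theorem ComprehensiveDiagonals.hasEqualizers (hcd : ComprehensiveDiagonals P hE)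
    {hC : Comprehension P} (hs : hC.Strong P) : HasEqualizers C :=
  have : ∀ {X A : C} {f g : X ⟶ A}, HasLimit (parallelPair f g) :=
    fun {_ _ f g} => ⟨⟨⟨_, hcd.isLimitComprehensionFork hs f g⟩⟩⟩
  hasEqualizers_of_hasLimit_parallelPair C

end

/-- If `P` is elementary with comprehensive diagonals and strong
comprehensions, then the base category has all finite limits; concretely, for
parallel arrows `f g : X ⟶ A` the comprehension arrow of `P⟨f,g⟩(δ A)` is an
equalizer of `f` and `g`. -/
theorem finite_limits_of_strong_comprehension
    (hE : IsElementary P) (hC : Comprehension P)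
    (hcd : ComprehensiveDiagonals P hE) (hs : hC.Strong P) :
    HasFiniteLimits C ∧
      ∀ {X A : C} (f g : X ⟶ A),
        (hC.cArr (rmap P (prod.lift f g) (hE.δ A)) ≫ f =
            hC.cArr (rmap P (prod.lift f g) (hE.δ A)) ≫ g) ∧
          ∀ {Z : C} (h : Z ⟶ X), h ≫ f = h ≫ g →
            ∃! k : Z ⟶ hC.cObj (rmap P (prod.lift f g) (hE.δ A)),
              k ≫ hC.cArr (rmap P (prod.lift f g) (hE.δ A)) = h := by
  refine ⟨?_, fun f g => ⟨hcd.cArr_comp_eq hC f g, fun h hfg => ?_⟩⟩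
  · have := hcd.hasEqualizers hs
    exact hasFiniteLimits_of_hasEqualizers_and_finite_products
  · exact Fork.IsLimit.existsUnique (hcd.isLimitComprehensionFork hs f g) h hfg

end DoctrinePaper
end
end

section
/- Let P : C^op → InfSL be an elementary existential doctrine with weak comprehension. Comprehension is full (α ≤ β iff ⊤_X = P({α})(β)) if and only if for every comprehension arrow {α} : X → A one has ∃_{{α}}(⊤_X) = α. -/
open CategoryTheory CategoryTheory.Limits Opposite

noncomputable section

universe w v u

namespace DoctrinePaper

variable {C : Type u} [Category.{v} C] [HasFiniteProducts C]

variable (P : Cᵒᵖ ⥤ SemilatInfCat.{w})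

/-- In an elementary existential doctrine with weak comprehension,
comprehension is full iff for every comprehension arrow `{α}` one has
`∃_{{α}}(⊤) = α`. -/
theorem full_iff_exists_top
    (hP : IsExistential P) (hC : Comprehension P) :
    hC.Full P ↔ ∀ {A : C} (α : Fib P A), hP.E (hC.cArr α) (⊤ : Fib P (hC.cObj α)) = α := by
  have rmono : ∀ {A B : C} (f : A ⟶ B), Monotone (rmap P f) := by
    intro A B f x y hxy
    have : rmap P f (x ⊓ y) = rmap P f x ⊓ rmap P f y :=
      (P.map f.op).map_inf' x y
    calc rmap P f x = rmap P f (x ⊓ y) := by rw [inf_eq_left.mpr hxy]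
      _ ≤ rmap P f y := by rw [this]; exact inf_le_right
  constructor
  · intro hFull A α
    apply le_antisymm
    · exact (hP.adjE _ _ _).mpr (le_of_eq (hC.cTop α).symm)
    · refine (hFull α _).mpr ?_
      exact top_le_iff.mp ((hP.adjE (hC.cArr α) ⊤ _).mp le_rfl)
  · intro hEx A α β
    constructor
    · intro h
      exact top_le_iff.mp ((hC.cTop α) ▸ rmono (hC.cArr α) h)
    · intro h
      calc α = hP.E (hC.cArr α) ⊤ := (hEx α).symm
        _ ≤ β := (hP.adjE _ _ _).mpr (le_of_eq h.symm)

end DoctrinePaper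
end
end

section
/- Let P : C^op → InfSL be a primary doctrine with a topology j. If P is implicational (each fiber has Heyting implication preserved appropriately), then so is P_j, with implication computed as in P (the implication of two j-closed elements is j-closed). Similarly, if P is universal (right adjoints to reindexing along projections satisfying Beck–Chevalley), then so is P_j, with the right adjoints computed as in P. -/
open CategoryTheory CategoryTheory.Limits Opposite

noncomputable section

universe w v u

namespace DoctrinePaper

variable {C : Type u} [Category.{v} C] [HasFiniteProducts C]

variable (P : Cᵒᵖ ⥤ SemilatInfCat.{w})

/-- A topology on a primary doctrine: a natural family of extensive, idempotent
inf-top-preserving maps commuting with reindexing. -/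
structure DocTopology where
  j : ∀ {A : C}, Fib P A → Fib P A
  map_inf : ∀ {A : C} (α β : Fib P A), j (α ⊓ β) = j α ⊓ j β
  map_top : ∀ {A : C}, j (⊤ : Fib P A) = ⊤
  natural : ∀ {A B : C} (f : A ⟶ B) (β : Fib P B), rmap P f (j β) = j (rmap P f β)
  le_j : ∀ {A : C} (α : Fib P A), α ≤ j α
  idem : ∀ {A : C} (α : Fib P A), j (j α) = j α

/-- An implicational doctrine: each fiber has Heyting implication. -/
structure IsImplicational where
  imp : ∀ {A : C}, Fib P A → Fib P A → Fib P A
  adj : ∀ {A : C} (α β γ : Fib P A), γ ≤ imp α β ↔ γ ⊓ α ≤ β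

/-- A universal doctrine: right adjoints to reindexing along projections,
satisfying the Beck–Chevalley condition. -/
structure IsUniversal where
  all : ∀ {B A : C}, Fib P (B ⨯ A) → Fib P A
  adj : ∀ {B A : C} (γ : Fib P (B ⨯ A)) (β : Fib P A),
    rmap P (prod.snd : B ⨯ A ⟶ A) β ≤ γ ↔ β ≤ all γ
  beckChevalley : ∀ {B A A' : C} (f : A' ⟶ A) (γ : Fib P (B ⨯ A)),
    rmap P f (all γ) = all (rmap P (prod.map (𝟙 B) f) γ)

/-- If `P` is implicational then so is the doctrine `P_j` of
`j`-closed elements, with implication computed as in `P` (the implication of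
`j`-closed elements is `j`-closed); similarly if `P` is universal then so is
`P_j`, with the right adjoints computed as in `P`. -/
theorem closed_elements_implicational_universal (hT : DocTopology P) :
    (∀ hI : IsImplicational P, ∀ {A : C} (α β : Fib P A),
      hT.j α = α → hT.j β = β → hT.j (hI.imp α β) = hI.imp α β) ∧
    (∀ hU : IsUniversal P, ∀ {B A : C} (γ : Fib P (B ⨯ A)),
      hT.j γ = γ → hT.j (hU.all γ) = hU.all γ) := by
  have jmono : ∀ {A : C} (x y : Fib P A), x ≤ y → hT.j x ≤ hT.j y := by
    intro A x y h
    have : x ⊓ y = x := inf_eq_left.mpr h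
    have := hT.map_inf x y
    rw [inf_eq_left.mpr h] at this
    rw [this]; exact inf_le_right
  constructor
  · intro hI A α β hα hβ
    refine le_antisymm ?_ (hT.le_j _)
    rw [hI.adj]
    calc hT.j (hI.imp α β) ⊓ α ≤ hT.j (hI.imp α β) ⊓ hT.j α := inf_le_inf_left _ (hT.le_j α)
      _ = hT.j (hI.imp α β ⊓ α) := (hT.map_inf _ _).symm
      _ ≤ hT.j β := jmono _ _ ((hI.adj α β _).mp le_rfl)
      _ = β := hβ
  · intro hU B A γ hγ
    refine le_antisymm ?_ (hT.le_j _)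
    rw [← hU.adj]
    calc rmap P (prod.snd : B ⨯ A ⟶ A) (hT.j (hU.all γ))
        = hT.j (rmap P prod.snd (hU.all γ)) := hT.natural _ _
      _ ≤ hT.j γ := jmono _ _ ((hU.adj γ (hU.all γ)).mpr le_rfl)
      _ = γ := hγ

end DoctrinePaper
end
end
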